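/- Define Z := Tr exp(log σ_{AB} − log(σ_A⊗I_B) + log(ρ_A⊗I_B)) and τ_{AB} := exp(log σ_{AB} − log(σ_A⊗I_B) + log(ρ_A⊗I_B))/Z, for states ρ_{AB}, σ_{AB} with supp(ρ_{AB}) ⊆ supp(σ_{AB}). If Z ≤ 1, then D(ρ_{AB}‖τ_{AB}) ≤ D(ρ_{AB}‖σ_{AB}) − D(ρ_A‖σ_A), where D is quantum relative entropy and ρ_A, σ_A are the reduced states on A. -/

import Mathlib

open Matrix
open scoped Kronecker ComplexOrder

noncomputable section

def mfun {n : Type*} [Fintype n] [DecidableEq n] (f : ℝ → ℝ) (A : Matrix n n ℂ) : Matrix n n ℂ :=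
  if h : A.IsHermitian then
    h.eigenvectorUnitary.1 * Matrix.diagonal (fun i => (f (h.eigenvalues i) : ℂ)) *
      (star h.eigenvectorUnitary.1)
  else 0

def psqrt {n : Type*} [Fintype n] [DecidableEq n] (A : Matrix n n ℂ) : Matrix n n ℂ :=
  mfun Real.sqrt A

def mlog {n : Type*} [Fintype n] [DecidableEq n] (A : Matrix n n ℂ) : Matrix n n ℂ :=
  mfun Real.log A

def traceNorm {n : Type*} [Fintype n] [DecidableEq n] (A : Matrix n n ℂ) : ℝ :=
  ((psqrt (Aᴴ * A)).trace).re

def fid {n : Type*} [Fintype n] [DecidableEq n] (ρ σ : Matrix n n ℂ) : ℝ :=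
  traceNorm (psqrt ρ * psqrt σ)

def vNEntropy {n : Type*} [Fintype n] [DecidableEq n] (A : Matrix n n ℂ) : ℝ :=
  - ((A * mlog A).trace).re

def relEnt {n : Type*} [Fintype n] [DecidableEq n] (ρ σ : Matrix n n ℂ) : ℝ :=
  ((ρ * mlog ρ).trace - (ρ * mlog σ).trace).re


/-- matrix exponential taken on the support: `exp` of the nonzero eigenvalues,
`0` on the kernel (matching the convention "exponentials are taken on the supports"). -/
def mexp0 {n : Type*} [Fintype n] [DecidableEq n] (A : Matrix n n ℂ) : Matrix n n ℂ :=
  mfun (fun x => if x = 0 then 0 else Real.exp x) A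

def margA13 {A B : Type*} [Fintype A] [Fintype B]
    (ρ : Matrix (A × B) (A × B) ℂ) : Matrix A A ℂ :=
  fun x y => ∑ b : B, ρ (x, b) (y, b)

/-!
Everything is a function of the Hermitian matrix `M`: `τ = Z⁻¹ exp₀(M)`, so with `P` the support
projection of `M` one has `log τ = M - (log Z) P`. Hence
`D(ρ‖τ) = Tr ρ log ρ - Tr ρ M + (log Z) Tr ρ P`, and the last term is `≤ 0` because `Z ≤ 1`
and `Tr ρ P ≥ 0`. Finally `Tr ρ M = Tr ρ log σ - Tr ρ_A log σ_A + Tr ρ_A log ρ_A`, since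
`log (X ⊗ I) = log X ⊗ I` and `Tr ρ_{AB} (X ⊗ I) = Tr ρ_A X`; this turns
`Tr ρ log ρ - Tr ρ M` into `D(ρ_{AB}‖σ_{AB}) - D(ρ_A‖σ_A)`.
-/

section FunctionalCalculus

variable {n : Type*} [Fintype n] [DecidableEq n]

theorem mfun_eq_cfc (f : ℝ → ℝ) (A : Matrix n n ℂ) : mfun f A = cfc f A := by
  by_cases hA : A.IsHermitian
  · rw [hA.cfc_eq, IsHermitian.cfc, Unitary.conjStarAlgAut_apply, mfun, dif_pos hA]
    rfl
  · rw [mfun, dif_neg hA]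
    exact (cfc_apply_of_not_predicate A hA).symm

variable {𝕜 : Type*} [RCLike 𝕜]

theorem Matrix.IsHermitian.trace_cfc {A : Matrix n n 𝕜} (hA : A.IsHermitian) (f : ℝ → ℝ) :
    (cfc f A).trace = ∑ i, (f (hA.eigenvalues i) : 𝕜) := by
  rw [hA.cfc_eq, IsHermitian.cfc, Unitary.conjStarAlgAut_apply, trace_mul_cycle,
    Unitary.coe_star_mul_self, one_mul, trace_diagonal]
  rfl

theorem Matrix.IsHermitian.le_re_trace_cfc {A : Matrix n n 𝕜} (hA : A.IsHermitian)
    {f : ℝ → ℝ} (hf : ∀ x, 0 ≤ f x) {x : ℝ} (hx : x ∈ spectrum ℝ A) :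
    f x ≤ RCLike.re (cfc f A).trace := by
  obtain ⟨i, rfl⟩ := hA.spectrum_real_eq_range_eigenvalues ▸ hx
  rw [hA.trace_cfc, map_sum]
  simp only [RCLike.ofReal_re]
  exact Finset.single_le_sum (fun j _ => hf _) (Finset.mem_univ i)

theorem Matrix.IsHermitian.re_trace_cfc_nonneg {A : Matrix n n 𝕜} (hA : A.IsHermitian)
    {f : ℝ → ℝ} (hf : ∀ x, 0 ≤ f x) : 0 ≤ RCLike.re (cfc f A).trace := by
  rw [hA.trace_cfc, map_sum]
  simp only [RCLike.ofReal_re]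
  exact Finset.sum_nonneg fun i _ => hf _

open scoped MatrixOrder in
theorem Matrix.PosSemidef.trace_mul_nonneg {A B : Matrix n n 𝕜}
    (hA : A.PosSemidef) (hB : B.PosSemidef) : 0 ≤ (A * B).trace := by
  obtain ⟨X, hX, -, rfl⟩ :=
    CFC.exists_sqrt_of_isSelfAdjoint_of_quasispectrumRestricts hB.isHermitian
      (QuasispectrumRestricts.nnreal_of_nonneg hB.nonneg)
  rw [← mul_assoc, trace_mul_cycle]
  simpa [← star_eq_conjTranspose, hX.star_eq] using
    (hA.conjTranspose_mul_mul_same X).trace_nonneg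

open scoped MatrixOrder in
theorem Matrix.posSemidef_cfc {f : ℝ → ℝ} (hf : ∀ x, 0 ≤ f x) (A : Matrix n n 𝕜) :
    (cfc f A).PosSemidef :=
  nonneg_iff_posSemidef.mp (cfc_nonneg fun x _ => hf x)

end FunctionalCalculus

section Support

def expOnSupport (x : ℝ) : ℝ := if x = 0 then 0 else Real.exp x

def supportIndicator (x : ℝ) : ℝ := if x = 0 then 0 else 1

theorem expOnSupport_nonneg (x : ℝ) : 0 ≤ expOnSupport x := by
  unfold expOnSupport
  split_ifs
  exacts [le_rfl, (Real.exp_pos x).le]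

theorem supportIndicator_nonneg (x : ℝ) : 0 ≤ supportIndicator x := by
  unfold supportIndicator
  split_ifs <;> norm_num

-- At `x = 0` both sides vanish because `Real.log 0 = 0`; this also covers `Z = 0`.
theorem log_inv_mul_expOnSupport {Z x : ℝ} (hx : expOnSupport x ≤ Z) :
    Real.log (Z⁻¹ * expOnSupport x) = x - Real.log Z * supportIndicator x := by
  unfold expOnSupport supportIndicator at *
  split_ifs at * with h
  · simp [h]
  · have hZ : 0 < Z := (Real.exp_pos x).trans_le hx
    rw [Real.log_mul (inv_ne_zero hZ.ne') (Real.exp_ne_zero x), Real.log_inv, Real.log_exp]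
    ring

variable {n : Type*} [Fintype n] [DecidableEq n] {𝕜 : Type*} [RCLike 𝕜]

theorem cfc_log_smul_cfc_expOnSupport {M : Matrix n n 𝕜} (hM : IsSelfAdjoint M) {Z : ℝ}
    (hZ : ∀ x ∈ spectrum ℝ M, expOnSupport x ≤ Z) :
    cfc Real.log (Z⁻¹ • cfc expOnSupport M) = M - Real.log Z • cfc supportIndicator M := by
  have hc (f : ℝ → ℝ) (A : Matrix n n 𝕜) : ContinuousOn f (spectrum ℝ A) :=
    A.finite_real_spectrum.continuousOn f
  calc cfc Real.log (Z⁻¹ • cfc expOnSupport M)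
      = cfc Real.log (cfc (fun x => Z⁻¹ * expOnSupport x) M) := by
        rw [cfc_const_mul _ _ _ (hc _ _)]
    _ = cfc (fun x => Real.log (Z⁻¹ * expOnSupport x)) M :=
        (cfc_comp Real.log _ M hM ((M.finite_real_spectrum.image _).continuousOn _)
          (hc _ _)).symm
    _ = cfc (fun x => x - Real.log Z * supportIndicator x) M :=
        cfc_congr fun x hx => log_inv_mul_expOnSupport (hZ x hx)
    _ = M - Real.log Z • cfc supportIndicator M := by
        rw [cfc_sub _ _ _ (hc _ _) (hc _ _), cfc_id' ℝ M hM, cfc_const_mul _ _ _ (hc _ _)]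

end Support

section Kronecker

variable (A B R : Type*) [Fintype A] [DecidableEq A] [Fintype B] [DecidableEq B]
  [CommSemiring R] [StarRing R]

def kroneckerOneStarAlgHom : Matrix A A R →⋆ₐ[R] Matrix (A × B) (A × B) R where
  toFun X := X ⊗ₖ (1 : Matrix B B R)
  map_one' := one_kronecker_one
  map_mul' X Y := by rw [← mul_kronecker_mul, mul_one]
  map_zero' := zero_kronecker _
  map_add' X Y := add_kronecker X Y _
  commutes' r := by simp [Algebra.algebraMap_eq_smul_one, smul_kronecker]
  map_star' X := by simp [star_eq_conjTranspose, conjTranspose_kronecker]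

variable {A B}

theorem cfc_kronecker_one (f : ℝ → ℝ) {X : Matrix A A ℂ} (hX : X.IsHermitian) :
    cfc f (X ⊗ₖ (1 : Matrix B B ℂ)) = cfc f X ⊗ₖ (1 : Matrix B B ℂ) := by
  have hφ : Continuous (kroneckerOneStarAlgHom A B ℂ) :=
    (kroneckerOneStarAlgHom A B ℂ).toLinearMap.continuous_of_finiteDimensional
  exact ((kroneckerOneStarAlgHom A B ℂ).map_cfc f X (X.finite_real_spectrum.continuousOn f) hφ hX
    (IsSelfAdjoint.map hX _)).symm

theorem mlog_kronecker_one {X : Matrix A A ℂ} (hX : X.IsHermitian) :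
    mlog (X ⊗ₖ (1 : Matrix B B ℂ)) = mlog X ⊗ₖ (1 : Matrix B B ℂ) := by
  simp only [mlog, mfun_eq_cfc, cfc_kronecker_one _ hX]

end Kronecker

section PartialTrace

variable {A B : Type*} [Fintype A] [Fintype B]

theorem margA13_isHermitian {ρ : Matrix (A × B) (A × B) ℂ} (h : ρ.IsHermitian) :
    (margA13 ρ).IsHermitian := by
  ext x y
  simp only [conjTranspose_apply, margA13, star_sum]
  exact Finset.sum_congr rfl fun b _ => h.apply (x, b) (y, b)

theorem trace_mul_kronecker_one [DecidableEq B] (R : Matrix (A × B) (A × B) ℂ)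
    (X : Matrix A A ℂ) :
    (R * (X ⊗ₖ (1 : Matrix B B ℂ))).trace = (margA13 R * X).trace := by
  simp only [trace, diag, mul_apply, kroneckerMap_apply, one_apply, margA13,
    Fintype.sum_prod_type]
  simp only [mul_ite, mul_one, mul_zero, Finset.sum_ite_eq', Finset.mem_univ, if_true,
    Finset.sum_mul]
  exact Finset.sum_congr rfl fun a _ => Finset.sum_comm

end PartialTrace

theorem relEnt_le_of_mlog_eq {n : Type*} [Fintype n] [DecidableEq n]
    {ρ τ M P : Matrix n n ℂ} {c : ℝ} (hρ : ρ.PosSemidef) (hP : P.PosSemidef) (hc : c ≤ 0)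
    (h : mlog τ = M - c • P) :
    relEnt ρ τ ≤ ((ρ * mlog ρ).trace - (ρ * M).trace).re := by
  have htr : 0 ≤ (ρ * P).trace.re := (Complex.nonneg_iff.mp (hρ.trace_mul_nonneg hP)).1
  have hexpand : relEnt ρ τ
      = ((ρ * mlog ρ).trace - (ρ * M).trace).re + c * (ρ * P).trace.re := by
    rw [relEnt, h, Matrix.mul_sub, trace_sub, mul_smul_comm, trace_smul, Complex.real_smul]
    simp only [Complex.sub_re, Complex.re_ofReal_mul]
    ring
  rw [hexpand]
  linarith [mul_nonpos_of_nonpos_of_nonneg hc htr]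

theorem stmt13_general {A B : Type*} [Fintype A] [DecidableEq A] [Fintype B] [DecidableEq B]
    (ρAB σAB : Matrix (A × B) (A × B) ℂ)
    (hρ : ρAB.PosSemidef)
    (hσ : σAB.PosSemidef)
    (M : Matrix (A × B) (A × B) ℂ)
    (hM : M = mlog σAB - mlog ((margA13 σAB) ⊗ₖ (1 : Matrix B B ℂ))
        + mlog ((margA13 ρAB) ⊗ₖ (1 : Matrix B B ℂ)))
    (Z : ℝ) (hZdef : Z = ((mexp0 M).trace).re) (hZ : Z ≤ 1)
    (τAB : Matrix (A × B) (A × B) ℂ) (hτ : τAB = Z⁻¹ • mexp0 M) :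
    relEnt ρAB τAB ≤ relEnt ρAB σAB - relEnt (margA13 ρAB) (margA13 σAB) := by
  have hMh : M.IsHermitian := by
    rw [hM]
    simp only [mlog, mfun_eq_cfc]
    exact IsSelfAdjoint.add (IsSelfAdjoint.sub (cfc_predicate _ _) (cfc_predicate _ _))
      (cfc_predicate _ _)
  have hexp : mexp0 M = cfc expOnSupport M := mfun_eq_cfc _ M
  have hZ0 : 0 ≤ Z := hZdef ▸ hexp ▸ hMh.re_trace_cfc_nonneg expOnSupport_nonneg
  have hlogτ : mlog τAB = M - Real.log Z • cfc supportIndicator M := by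
    rw [hτ, mlog, mfun_eq_cfc, hexp]
    exact cfc_log_smul_cfc_expOnSupport hMh fun x hx =>
      hZdef ▸ hexp ▸ hMh.le_re_trace_cfc expOnSupport_nonneg hx
  have hP : (cfc supportIndicator M).PosSemidef := posSemidef_cfc supportIndicator_nonneg M
  refine (relEnt_le_of_mlog_eq hρ hP (Real.log_nonpos hZ0 hZ) hlogτ).trans_eq ?_
  rw [hM, relEnt, relEnt, Matrix.mul_add, Matrix.mul_sub, trace_add, trace_sub,
    mlog_kronecker_one (margA13_isHermitian hσ.isHermitian),
    mlog_kronecker_one (margA13_isHermitian hρ.isHermitian),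
    trace_mul_kronecker_one, trace_mul_kronecker_one]
  simp only [Complex.sub_re, Complex.add_re]
  ring

/-- with M = log σ_AB − log(σ_A⊗I) + log(ρ_A⊗I),
Z = Tr exp(M) and τ_AB = exp(M)/Z, if supp(ρ_AB) ⊆ supp(σ_AB) and Z ≤ 1, then
D(ρ_AB‖τ_AB) ≤ D(ρ_AB‖σ_AB) − D(ρ_A‖σ_A). -/
theorem stmt13 {A B : Type*} [Fintype A] [DecidableEq A] [Fintype B] [DecidableEq B]
    (ρAB σAB : Matrix (A × B) (A × B) ℂ)
    (hρ : ρAB.PosSemidef) (hρ1 : ρAB.trace = 1)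
    (hσ : σAB.PosSemidef) (hσ1 : σAB.trace = 1)
    (hsupp : ∀ v : A × B → ℂ, σAB.mulVec v = 0 → ρAB.mulVec v = 0)
    (M : Matrix (A × B) (A × B) ℂ)
    (hM : M = mlog σAB - mlog ((margA13 σAB) ⊗ₖ (1 : Matrix B B ℂ))
        + mlog ((margA13 ρAB) ⊗ₖ (1 : Matrix B B ℂ)))
    (Z : ℝ) (hZdef : Z = ((mexp0 M).trace).re) (hZ : Z ≤ 1)
    (τAB : Matrix (A × B) (A × B) ℂ) (hτ : τAB = Z⁻¹ • mexp0 M) :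
    relEnt ρAB τAB ≤ relEnt ρAB σAB - relEnt (margA13 ρAB) (margA13 σAB) :=
  stmt13_general ρAB σAB hρ hσ M hM Z hZdef hZ τAB hτ
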